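/- Define the operation Der on pairs of formal power series over ℚ by Der(d, h) = (h', t·d). Let Pas = ((1−t)^{−1}, t·(1−t)^{−1}) be the pair defining the Pascal Riordan array. Then for every i ≥ 0, the 2i-fold iterate satisfies Der^{2i}(Pas) = (P_i(t), t·P_i(t)) and the (2i+1)-fold iterate satisfies Der^{2i+1}(Pas) = (P_{i+1}(t), t·P_i(t)), where P_i(t) = ∑_{k≥0} (k+1)^i·t^k. (Equivalently, Der^{2i}(Pas) = 𝓡(A_i(t)/(1−t)^{i+1}, t·A_i(t)/(1−t)^{i+1}) with A_i the i-th Eulerian polynomial.) -/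

import Mathlib

open PowerSeries

/-- The operation `Der` on pairs of formal power series:
`Der(d, h) = (h', t·d)`. -/
noncomputable def riordanDer (p : ℚ⟦X⟧ × ℚ⟦X⟧) : ℚ⟦X⟧ × ℚ⟦X⟧ :=
  (p.2.derivativeFun, X * p.1)

/-- `P i = ∑_{k≥0} (k+1)^i t^k`, the power series of `i`-th powers of the
positive integers (equal to `A_i(t)/(1−t)^{i+1}` with `A_i` the Eulerian polynomial). -/
noncomputable def powSeries (i : ℕ) : ℚ⟦X⟧ :=
  PowerSeries.mk fun k => ((k + 1 : ℕ) : ℚ) ^ i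

/-!
Differentiating `t·P_i = ∑ (k+1)^i t^(k+1)` multiplies the coefficient of `t^k` by `k + 1`, so
`(t·P_i)' = P_(i+1)`. Starting from `Pas = (P_0, t·P_0)`, `Der` therefore alternates between
`(P_i, t·P_i) ↦ (P_(i+1), t·P_i)` and `(P_(i+1), t·P_i) ↦ (P_(i+1), t·P_(i+1))`.
-/

theorem inv_one_sub_X_eq_powSeries_zero : (1 - X : ℚ⟦X⟧)⁻¹ = powSeries 0 := by
  rw [inv_eq_iff_mul_eq_one (by simp)]
  exact mk_one_mul_one_sub_eq_one ℚ

theorem derivative_X_mul_powSeries (i : ℕ) :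
    d⁄dX ℚ (X * powSeries i) = powSeries (i + 1) := by
  ext n
  rw [coeff_derivative, coeff_succ_X_mul]
  simp [powSeries, pow_succ]

theorem riordanDer_pair_X_mul_powSeries (d : ℚ⟦X⟧) (i : ℕ) :
    riordanDer (d, X * powSeries i) = (powSeries (i + 1), X * d) :=
  Prod.ext (derivative_X_mul_powSeries i) rfl

/-- iterated derivatives of the Pascal array
`Pas = 𝓡(1/(1−t), t/(1−t))`: for all `i ≥ 0`,
`Der^{2i}(Pas) = 𝓡(P_i, t·P_i)` and `Der^{2i+1}(Pas) = 𝓡(P_{i+1}, t·P_i)`. -/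
theorem der_iterate_pascal (i : ℕ) :
    riordanDer^[2 * i] ((1 - X : ℚ⟦X⟧)⁻¹, X * (1 - X : ℚ⟦X⟧)⁻¹) =
      (powSeries i, X * powSeries i) ∧
    riordanDer^[2 * i + 1] ((1 - X : ℚ⟦X⟧)⁻¹, X * (1 - X : ℚ⟦X⟧)⁻¹) =
      (powSeries (i + 1), X * powSeries i) := by
  induction i with
  | zero =>
    rw [inv_one_sub_X_eq_powSeries_zero]
    exact ⟨rfl, riordanDer_pair_X_mul_powSeries _ 0⟩
  | succ i ih =>
    have heven : riordanDer^[2 * (i + 1)] ((1 - X : ℚ⟦X⟧)⁻¹, X * (1 - X : ℚ⟦X⟧)⁻¹) =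
        (powSeries (i + 1), X * powSeries (i + 1)) := by
      rw [Nat.mul_succ, Function.iterate_succ_apply', ih.2, riordanDer_pair_X_mul_powSeries]
    refine ⟨heven, ?_⟩
    rw [Function.iterate_succ_apply', heven, riordanDer_pair_X_mul_powSeries]
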